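/- Fix \alpha \in (0,1), m > 0 and \gamma \in (0, 1/2). For each N let X_N and Y_N be independent centered Gaussian random variables with variances \alpha^2 N and (1-\alpha^2)N respectively. Then \lim_{N\to\infty} \frac{1}{N} \log P\big( X_N < -mN,\ |X_N + Y_N| \le N^{1/2+\gamma} \big) = -\frac{m^2}{2\alpha^2(1-\alpha^2)}. -/

import Mathlib

/-!
By independence the probability is the mass that the product of the two Gaussian laws gives to
`{(x, y) | x < -mN, |x + y| ≤ N^{1/2+γ}}`. This set contains the unit-size rectangle
`[-mN-1, -mN-1/2] × [mN, mN+1]`, whose mass is at least its area times the densities at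
`±(mN+1)`; and it is contained in `{x < -mN} × {y > mN - N^{1/2+γ}}`, whose mass is at most the
product of the two Chernoff bounds. Both bounds decay like
`exp(-N (m²/(2α²) + m²/(2(1-α²))))` up to subexponential factors, since `N^{1/2+γ} = o(N)`.
-/

open MeasureTheory ProbabilityTheory Filter Real Set Topology
open scoped NNReal

namespace ProbabilityTheory

lemma IndepFun.measureReal_preimage_eq_prod {Ω α β : Type*} {_ : MeasurableSpace Ω}
    [MeasurableSpace α] [MeasurableSpace β] {P : Measure Ω} [IsFiniteMeasure P]
    {X : Ω → α} {Y : Ω → β} (hX : AEMeasurable X P) (hY : AEMeasurable Y P)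
    (hXY : IndepFun X Y P) {s : Set (α × β)} (hs : MeasurableSet s) :
    P.real {ω | (X ω, Y ω) ∈ s} = ((P.map X).prod (P.map Y)).real s := by
  rw [← (indepFun_iff_map_prod_eq_prod_map_map hX hY).mp hXY,
    map_measureReal_apply_of_aemeasurable (hX.prodMk hY) hs]
  rfl

lemma hasSubgaussianMGF_id_gaussianReal (v : ℝ≥0) :
    HasSubgaussianMGF id v (gaussianReal 0 v) where
  integrable_exp_mul := integrable_exp_mul_gaussianReal
  mgf_le t := by simp [mgf_id_gaussianReal]

lemma gaussianPDFReal_le_of_abs_le {μ : ℝ} {v : ℝ≥0} {x y : ℝ} (h : |x - μ| ≤ |y - μ|) :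
    gaussianPDFReal μ v y ≤ gaussianPDFReal μ v x := by
  simp only [gaussianPDFReal]
  gcongr ?_ * exp (-?_ / _)
  exact sq_le_sq.mpr h

lemma mul_gaussianPDFReal_le_measureReal_Icc {μ : ℝ} {v : ℝ≥0} (hv : v ≠ 0) {a b c : ℝ}
    (hab : a ≤ b) (hc : ∀ x ∈ Icc a b, |x - μ| ≤ |c - μ|) :
    (b - a) * gaussianPDFReal μ v c ≤ (gaussianReal μ v).real (Icc a b) := by
  rw [measureReal_def, gaussianReal_apply_eq_integral μ hv,
    ENNReal.toReal_ofReal (setIntegral_nonneg measurableSet_Icc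
      fun x _ ↦ gaussianPDFReal_nonneg μ v x)]
  calc (b - a) * gaussianPDFReal μ v c = ∫ _ in Icc a b, gaussianPDFReal μ v c := by
        rw [setIntegral_const, Real.volume_real_Icc_of_le hab, smul_eq_mul]
    _ ≤ ∫ x in Icc a b, gaussianPDFReal μ v x :=
        setIntegral_mono_on (integrable_const _) (integrable_gaussianPDFReal μ v).restrict
          measurableSet_Icc fun x hx ↦ gaussianPDFReal_le_of_abs_le (hc x hx)

variable {v₁ v₂ : ℝ≥0} {a r : ℝ}

lemma mul_gaussianPDFReal_le_gaussianReal_prod_real (hv₁ : v₁ ≠ 0) (hv₂ : v₂ ≠ 0)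
    (ha : 0 ≤ a) (hr : 1 ≤ r) :
    1 / 2 * gaussianPDFReal 0 v₁ (a + 1) * gaussianPDFReal 0 v₂ (a + 1)
      ≤ ((gaussianReal 0 v₁).prod (gaussianReal 0 v₂)).real
          {p | p.1 < -a ∧ |p.1 + p.2| ≤ r} := by
  have hx := mul_gaussianPDFReal_le_measureReal_Icc (μ := 0) (a := -a - 1) (b := -a - 1 / 2)
    (c := a + 1) hv₁ (by linarith) fun x hx ↦ by
      simpa using abs_le_abs (by linarith [hx.2]) (by linarith [hx.1])
  have hy := mul_gaussianPDFReal_le_measureReal_Icc (μ := 0) (a := a) (b := a + 1)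
    (c := a + 1) hv₂ (by linarith) fun y hy ↦ by
      simpa using abs_le_abs (by linarith [hy.2]) (by linarith [hy.1])
  have hrect : Icc (-a - 1) (-a - 1 / 2) ×ˢ Icc a (a + 1) ⊆ {p | p.1 < -a ∧ |p.1 + p.2| ≤ r} := by
    rintro ⟨x, y⟩ ⟨⟨hx₁, hx₂⟩, hy₁, hy₂⟩
    refine ⟨by linarith, abs_le.mpr ⟨by linarith, by linarith⟩⟩
  calc 1 / 2 * gaussianPDFReal 0 v₁ (a + 1) * gaussianPDFReal 0 v₂ (a + 1)
      ≤ (gaussianReal 0 v₁).real (Icc (-a - 1) (-a - 1 / 2))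
          * (gaussianReal 0 v₂).real (Icc a (a + 1)) := by
        rw [show -a - 1 / 2 - (-a - 1) = 1 / 2 by ring] at hx
        rw [add_sub_cancel_left, one_mul] at hy
        exact mul_le_mul hx hy (gaussianPDFReal_nonneg _ _ _) measureReal_nonneg
    _ ≤ _ := by rw [← measureReal_prod_prod]; exact measureReal_mono hrect

lemma gaussianReal_prod_real_le_exp_mul_exp (ha : 0 ≤ a) (hra : r ≤ a) :
    ((gaussianReal 0 v₁).prod (gaussianReal 0 v₂)).real {p | p.1 < -a ∧ |p.1 + p.2| ≤ r}
      ≤ exp (-a ^ 2 / (2 * v₁)) * exp (-(a - r) ^ 2 / (2 * v₂)) := by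
  have hsub : {p : ℝ × ℝ | p.1 < -a ∧ |p.1 + p.2| ≤ r}
      ⊆ {x | a ≤ (-id : ℝ → ℝ) x} ×ˢ {y | a - r ≤ id y} := by
    rintro ⟨x, y⟩ ⟨hx, hxy⟩
    have hxy' := (abs_le.mp hxy).1
    exact ⟨by simp; linarith, by simp; linarith⟩
  calc _ ≤ _ := measureReal_mono hsub
    _ = _ := measureReal_prod_prod _ _
    _ ≤ _ := by
      gcongr
      · exact (hasSubgaussianMGF_id_gaussianReal v₁).neg.measure_ge_le ha
      · exact (hasSubgaussianMGF_id_gaussianReal v₂).measure_ge_le (by linarith)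

end ProbabilityTheory

def HasExpRate (p : ℕ → ℝ) (ℓ : ℝ) : Prop :=
  Tendsto (fun N : ℕ ↦ log (p N) / N) atTop (𝓝 ℓ)

namespace HasExpRate

variable {p q L U : ℕ → ℝ} {a b ℓ : ℝ}

lemma const (c : ℝ) : HasExpRate (fun _ ↦ c) 0 :=
  tendsto_const_nhds.div_atTop tendsto_natCast_atTop_atTop

lemma congr' (h : HasExpRate p ℓ) (hpq : p =ᶠ[atTop] q) : HasExpRate q ℓ :=
  Tendsto.congr' (hpq.mono fun N hN ↦ by rw [hN]) h

lemma mul (hp : HasExpRate p a) (hq : HasExpRate q b) (hp₀ : ∀ᶠ N in atTop, p N ≠ 0)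
    (hq₀ : ∀ᶠ N in atTop, q N ≠ 0) : HasExpRate (fun N ↦ p N * q N) (a + b) :=
  (hp.add hq).congr' <| by
    filter_upwards [hp₀, hq₀] with N hpN hqN
    rw [log_mul hpN hqN, add_div]

lemma of_le_of_le (hL : HasExpRate L ℓ) (hU : HasExpRate U ℓ) (hL₀ : ∀ᶠ N in atTop, 0 < L N)
    (hLp : ∀ᶠ N in atTop, L N ≤ p N) (hpU : ∀ᶠ N in atTop, p N ≤ U N) : HasExpRate p ℓ := by
  refine tendsto_of_tendsto_of_tendsto_of_le_of_le' hL hU ?_ ?_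
  · filter_upwards [hL₀, hLp] with N hL₀N hLpN
    gcongr
  · filter_upwards [hL₀, hLp, hpU] with N hL₀N hLpN hpUN
    gcongr
    linarith

lemma exp_neg_sq_div {x : ℕ → ℝ} (hx : Tendsto (fun N ↦ x N / N) atTop (𝓝 a)) (hb : 0 ≤ b) :
    HasExpRate (fun N ↦ exp (-x N ^ 2 / (2 * (b * N).toNNReal))) (-a ^ 2 / (2 * b)) := by
  refine ((hx.pow 2).neg.div_const (2 * b)).congr fun N ↦ ?_
  rw [log_exp, Real.coe_toNNReal _ (by positivity)]
  ring

lemma inv_sqrt_mul_natCast {c : ℝ} (hc : 0 < c) : HasExpRate (fun N ↦ (√(c * N))⁻¹) 0 := by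
  have hlog : Tendsto (fun N : ℕ ↦ log N / N) atTop (𝓝 0) :=
    isLittleO_log_id_atTop.tendsto_div_nhds_zero.comp tendsto_natCast_atTop_atTop
  refine (((const c).add hlog).neg.div_const 2).congr' ?_ |>.trans (by simp)
  filter_upwards [eventually_ge_atTop 1] with N hN
  have hN : (N : ℝ) ≠ 0 := by positivity
  rw [log_inv, log_sqrt (by positivity), log_mul hc.ne' hN]
  ring

lemma gaussianPDFReal_zero {x : ℕ → ℝ} (hx : Tendsto (fun N ↦ x N / N) atTop (𝓝 a))
    (hb : 0 < b) :
    HasExpRate (fun N ↦ gaussianPDFReal 0 (b * N).toNNReal (x N)) (-a ^ 2 / (2 * b)) := by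
  refine ((inv_sqrt_mul_natCast (by positivity : 0 < 2 * π * b)).mul (exp_neg_sq_div hx hb.le)
    ?_ (.of_forall fun N ↦ (exp_pos _).ne')).congr' ?_ |>.trans (by rw [zero_add])
  · filter_upwards [eventually_ge_atTop 1] with N hN
    have : (0 : ℝ) < N := by exact_mod_cast hN
    positivity
  · refine .of_forall fun N ↦ ?_
    have hv : ((b * N).toNNReal : ℝ) = b * N := Real.coe_toNNReal _ (by positivity)
    simp only [gaussianPDFReal_def, sub_zero, hv, mul_assoc]

end HasExpRate

section Asymptotics

variable {m s b₁ b₂ : ℝ}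

lemma tendsto_mul_add_div_natCast {f : ℕ → ℝ} (hf : Tendsto (fun N ↦ f N / N) atTop (𝓝 0)) :
    Tendsto (fun N : ℕ ↦ (m * N + f N) / N) atTop (𝓝 m) := by
  refine (tendsto_const_nhds.add hf).congr' ?_ |>.trans (by rw [add_zero])
  filter_upwards [eventually_ge_atTop 1] with N hN
  have hN : (N : ℝ) ≠ 0 := by positivity
  field_simp

lemma tendsto_rpow_div_natCast (hs : s < 1) :
    Tendsto (fun N : ℕ ↦ (N : ℝ) ^ s / N) atTop (𝓝 0) := by
  refine ((tendsto_rpow_neg_atTop (by linarith : 0 < 1 - s)).comp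
    tendsto_natCast_atTop_atTop).congr' ?_
  filter_upwards [eventually_ge_atTop 1] with N hN
  rw [Function.comp_apply, neg_sub, rpow_sub (by positivity), rpow_one]

lemma eventually_rpow_le_mul_natCast (hm : 0 < m) (hs : s < 1) :
    ∀ᶠ N : ℕ in atTop, (N : ℝ) ^ s ≤ m * N := by
  filter_upwards [(tendsto_rpow_div_natCast hs).eventually_le_const hm,
    eventually_ge_atTop 1] with N hN hN₁
  rwa [div_le_iff₀ (by positivity)] at hN

lemma eventually_gaussianPDFReal_pos (hb : 0 < b₁) (x : ℕ → ℝ) :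
    ∀ᶠ N : ℕ in atTop, 0 < gaussianPDFReal 0 (b₁ * N).toNNReal (x N) := by
  filter_upwards [eventually_ge_atTop 1] with N hN
  have : (0 : ℝ) < N := by exact_mod_cast hN
  exact gaussianPDFReal_pos _ _ _ (Real.toNNReal_pos.mpr (by positivity)).ne'

lemma hasExpRate_half_mul_gaussianPDFReal_mul_gaussianPDFReal (hb₁ : 0 < b₁) (hb₂ : 0 < b₂) :
    HasExpRate (fun N ↦ 1 / 2 * gaussianPDFReal 0 (b₁ * N).toNNReal (m * N + 1)
        * gaussianPDFReal 0 (b₂ * N).toNNReal (m * N + 1))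
      (-m ^ 2 / (2 * b₁) + -m ^ 2 / (2 * b₂)) := by
  have hx := tendsto_mul_add_div_natCast (m := m)
    (tendsto_const_nhds.div_atTop tendsto_natCast_atTop_atTop (f := fun _ ↦ (1 : ℝ)))
  have hpdf₁ := eventually_gaussianPDFReal_pos hb₁ (fun N ↦ m * N + 1)
  have hpdf₂ := eventually_gaussianPDFReal_pos hb₂ (fun N ↦ m * N + 1)
  refine (((HasExpRate.const _).mul (.gaussianPDFReal_zero hx hb₁) (.of_forall fun _ ↦ by norm_num)
    (hpdf₁.mono fun _ h ↦ h.ne')).mul (.gaussianPDFReal_zero hx hb₂) ?_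
    (hpdf₂.mono fun _ h ↦ h.ne')).trans (by rw [zero_add])
  filter_upwards [hpdf₁] with N hN
  positivity

lemma hasExpRate_exp_mul_exp (hb₁ : 0 < b₁) (hb₂ : 0 < b₂) (hs : s < 1) :
    HasExpRate (fun N ↦ exp (-(m * N) ^ 2 / (2 * (b₁ * N).toNNReal))
        * exp (-(m * N - N ^ s) ^ 2 / (2 * (b₂ * N).toNNReal)))
      (-m ^ 2 / (2 * b₁) + -m ^ 2 / (2 * b₂)) := by
  have hx₁ : Tendsto (fun N : ℕ ↦ m * N / N) atTop (𝓝 m) := by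
    simpa using tendsto_mul_add_div_natCast (m := m) (f := 0) (by simp)
  have hx₂ : Tendsto (fun N : ℕ ↦ (m * N - N ^ s) / N) atTop (𝓝 m) := by
    simpa [sub_eq_add_neg] using tendsto_mul_add_div_natCast (m := m)
      (f := fun N ↦ -(N : ℝ) ^ s) (by simpa [neg_div] using (tendsto_rpow_div_natCast hs).neg)
  exact (HasExpRate.exp_neg_sq_div hx₁ hb₁.le).mul (.exp_neg_sq_div hx₂ hb₂.le)
    (.of_forall fun _ ↦ (exp_pos _).ne') (.of_forall fun _ ↦ (exp_pos _).ne')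

end Asymptotics

/-- Exponential rate of the joint Gaussian probability: if `X_N, Y_N` are
independent centered Gaussians with variances `α²N` and `(1-α²)N`, then
`(1/N) log P(X_N < -mN, |X_N + Y_N| ≤ N^{1/2+γ}) → -m²/(2α²(1-α²))`. -/
theorem conditioned_gaussian_log_rate
    (α m γ : ℝ) (hα : α ∈ Set.Ioo (0 : ℝ) 1) (hm : 0 < m) (hγ : γ ∈ Set.Ioo (0 : ℝ) (1 / 2))
    (Ω : Type) (_ : MeasurableSpace Ω) (P : Measure Ω) [IsProbabilityMeasure P]
    (X Y : ℕ → Ω → ℝ)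
    (hXmeas : ∀ N, Measurable (X N)) (hYmeas : ∀ N, Measurable (Y N))
    (hindep : ∀ N, IndepFun (X N) (Y N) P)
    (hX : ∀ N, Measure.map (X N) P = gaussianReal 0 (Real.toNNReal (α ^ 2 * N)))
    (hY : ∀ N, Measure.map (Y N) P = gaussianReal 0 (Real.toNNReal ((1 - α ^ 2) * N))) :
    Tendsto (fun N : ℕ => (1 / (N : ℝ)) * Real.log
        ((P {ω | X N ω < -(m * N) ∧ |X N ω + Y N ω| ≤ (N : ℝ) ^ ((1 : ℝ) / 2 + γ)}).toReal))
      atTop (nhds (-(m ^ 2) / (2 * α ^ 2 * (1 - α ^ 2)))) := by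
  obtain ⟨hα₀, hα₁⟩ := hα
  have hb₁ : 0 < α ^ 2 := by positivity
  have hb₂ : 0 < 1 - α ^ 2 := by nlinarith
  have hs : (1 : ℝ) / 2 + γ < 1 := by linarith [hγ.2]
  have hlaw (N : ℕ) :
      (P {ω | X N ω < -(m * N) ∧ |X N ω + Y N ω| ≤ (N : ℝ) ^ ((1 : ℝ) / 2 + γ)}).toReal
        = ((gaussianReal 0 (α ^ 2 * N).toNNReal).prod
            (gaussianReal 0 ((1 - α ^ 2) * N).toNNReal)).real
          {p | p.1 < -(m * N) ∧ |p.1 + p.2| ≤ (N : ℝ) ^ ((1 : ℝ) / 2 + γ)} := by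
    rw [← hX N, ← hY N]
    exact (hindep N).measureReal_preimage_eq_prod (hXmeas N).aemeasurable
      (hYmeas N).aemeasurable <| (measurableSet_lt measurable_fst measurable_const).inter
        (measurableSet_le (measurable_fst.add measurable_snd).abs measurable_const)
  have hlim : -(m ^ 2) / (2 * α ^ 2 * (1 - α ^ 2))
      = -m ^ 2 / (2 * α ^ 2) + -m ^ 2 / (2 * (1 - α ^ 2)) := by
    field_simp
    ring
  simp only [one_div_mul_eq_div, hlaw, hlim]
  refine (hasExpRate_half_mul_gaussianPDFReal_mul_gaussianPDFReal hb₁ hb₂).of_le_of_le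
    (hasExpRate_exp_mul_exp hb₁ hb₂ hs) ?_ ?_ ?_
  · filter_upwards [eventually_gaussianPDFReal_pos hb₁ (fun N ↦ m * N + 1),
      eventually_gaussianPDFReal_pos hb₂ (fun N ↦ m * N + 1)] with N h₁ h₂
    positivity
  · filter_upwards [eventually_ge_atTop 1] with N hN
    have hN : (1 : ℝ) ≤ N := by exact_mod_cast hN
    exact mul_gaussianPDFReal_le_gaussianReal_prod_real
      (Real.toNNReal_pos.mpr (by positivity)).ne' (Real.toNNReal_pos.mpr (by positivity)).ne'
      (by positivity) (one_le_rpow hN (by linarith [hγ.1]))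
  · filter_upwards [eventually_rpow_le_mul_natCast hm hs] with N hN
    exact gaussianReal_prod_real_le_exp_mul_exp (by positivity) hN
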